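/- arXiv:2112.00266 — 6 statements merged into one kernel-verified Lean document; each statement's English description precedes it below -/
import Mathlib

section
/- Let k be a field and let R be a k-algebra realized by the retracts {S_ℓ : ℓ ∈ Λ}. If δ ∈ D^i(R,R) is a differential operator of order at most i and ℓ ∈ Λ, then δ_ℓ := π_ℓ∘δ∘ι_ℓ is a differential operator of order at most i on S_ℓ, i.e. δ_ℓ ∈ D^i(S_ℓ,S_ℓ). -/
/-- `IsDiffOpOfOrder k R i δ` means that the `k`-linear map `δ : R → R` is a
`k`-linear differential operator of order at most `i`, defined inductively:
order `0` operators are the `R`-linear maps, and `δ` has order at most `i+1`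
iff all commutators `[δ, r] = δ ∘ (r·) - (r·) ∘ δ` have order at most `i`. -/
def IsDiffOpOfOrder (k R : Type*) [CommSemiring k] [CommRing R] [Algebra k R] :
    ℕ → (R →ₗ[k] R) → Prop
  | 0, δ => ∀ r x : R, δ (r * x) = r * δ x
  | i + 1, δ => ∀ r : R,
      IsDiffOpOfOrder k R i (δ ∘ₗ LinearMap.mulLeft k r - LinearMap.mulLeft k r ∘ₗ δ)

/-- `R` is a `k`-algebra realized by the retracts `S ℓ`, `ℓ ∈ Λ`:  each `S ℓ` is a domain
and an algebra retract of `R` via `ι ℓ : S ℓ → R` (injective) and `π ℓ : R → S ℓ`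
(surjective) with `π ℓ ∘ ι ℓ = id`, the intersection of the kernels of the `π ℓ` is zero,
and the family is irredundant. -/
structure RealizedByRetracts (k R : Type*) [Field k] [CommRing R] [Algebra k R]
    (Λ : Type*) [Fintype Λ] [Nonempty Λ]
    (S : Λ → Type*) [∀ ℓ, CommRing (S ℓ)] [∀ ℓ, IsDomain (S ℓ)] [∀ ℓ, Algebra k (S ℓ)] where
  ι : ∀ ℓ, S ℓ →ₐ[k] R
  π : ∀ ℓ, R →ₐ[k] S ℓ
  ι_injective : ∀ ℓ, Function.Injective (ι ℓ)
  π_surjective : ∀ ℓ, Function.Surjective (π ℓ)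
  retract : ∀ ℓ, (π ℓ).comp (ι ℓ) = AlgHom.id k (S ℓ)
  kerInf : ∀ f : R, (∀ ℓ, π ℓ f = 0) → f = 0
  irredundant : ∀ i : Λ, ∃ f : R, f ≠ 0 ∧ ∀ ℓ, ℓ ≠ i → π ℓ f = 0

/-- If `R` is a `k`-algebra realized by the retracts `{S ℓ}` and `δ ∈ D^i(R,R)`, then for
each `ℓ` the map `δ_ℓ := π_ℓ ∘ δ ∘ ι_ℓ` is a differential operator of order at most `i`
on `S ℓ`. -/
theorem diffOp_restrict_retract {k R Λ : Type*} [Field k] [CommRing R] [Algebra k R]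
    [Fintype Λ] [Nonempty Λ] (S : Λ → Type*)
    [∀ ℓ, CommRing (S ℓ)] [∀ ℓ, IsDomain (S ℓ)] [∀ ℓ, Algebra k (S ℓ)]
    (h : RealizedByRetracts k R Λ S) (i : ℕ) (δ : R →ₗ[k] R)
    (hδ : IsDiffOpOfOrder k R i δ) (ℓ : Λ) :
    IsDiffOpOfOrder k (S ℓ) i
      ((h.π ℓ).toLinearMap ∘ₗ δ ∘ₗ (h.ι ℓ).toLinearMap) := by
  have hret : ∀ s : S ℓ, h.π ℓ (h.ι ℓ s) = s := fun s => by
    have := congrArg (fun f : S ℓ →ₐ[k] S ℓ => f s) (h.retract ℓ)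
    simpa using this
  induction i generalizing δ with
  | zero =>
    intro r x
    have := hδ (h.ι ℓ r) (h.ι ℓ x)
    simp only [LinearMap.comp_apply, AlgHom.toLinearMap_apply]
    rw [map_mul, this, map_mul, hret]
  | succ i ih =>
    intro s
    have key := ih (δ ∘ₗ LinearMap.mulLeft k (h.ι ℓ s) - LinearMap.mulLeft k (h.ι ℓ s) ∘ₗ δ)
      (hδ (h.ι ℓ s))
    convert key using 2
    ext x
    simp only [LinearMap.comp_apply, LinearMap.sub_apply, AlgHom.toLinearMap_apply,
      LinearMap.mulLeft_apply, map_sub, map_mul, hret]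
end

section
/- Let k be a field and let R be a k-algebra realized by the retracts {S_ℓ : ℓ ∈ Λ}. If δ ∈ D^i(R,R), ℓ ∈ Λ, and f ∈ R satisfies π_ℓ(f) = 0, then π_ℓ(δ(f)) = 0. -/
/-- If `R` is a `k`-algebra realized by the retracts `{S ℓ}`, `δ ∈ D^i(R,R)`, `ℓ ∈ Λ`,
and `f ∈ R` satisfies `π ℓ f = 0`, then `π ℓ (δ f) = 0`. -/
theorem diffOp_maps_kernel_to_kernel {k R Λ : Type*} [Field k] [CommRing R] [Algebra k R]
    [Fintype Λ] [Nonempty Λ] (S : Λ → Type*)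
    [∀ ℓ, CommRing (S ℓ)] [∀ ℓ, IsDomain (S ℓ)] [∀ ℓ, Algebra k (S ℓ)]
    (h : RealizedByRetracts k R Λ S) (i : ℕ) (δ : R →ₗ[k] R)
    (hδ : IsDiffOpOfOrder k R i δ) (ℓ : Λ) (f : R) (hf : h.π ℓ f = 0) :
    h.π ℓ (δ f) = 0 := by
  induction i generalizing δ with
  | zero =>
    have h1 : δ f = f * δ 1 := by simpa using hδ f 1
    rw [h1, map_mul, hf, zero_mul]
  | succ n ih =>
    obtain ⟨g, hg0, hgk⟩ := h.irredundant ℓ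
    have hπg : h.π ℓ g ≠ 0 := by
      intro hc
      refine hg0 (h.kerInf g fun m => ?_)
      by_cases hm : m = ℓ
      · subst hm; exact hc
      · exact hgk m hm
    have hgf : g * f = 0 := by
      refine h.kerInf _ fun m => ?_
      by_cases hm : m = ℓ
      · subst hm; rw [map_mul, hf, mul_zero]
      · rw [map_mul, hgk m hm, zero_mul]
    have key := ih _ (hδ g)
    simp only [LinearMap.sub_apply, LinearMap.comp_apply, LinearMap.mulLeft_apply,
      hgf, map_zero, zero_sub, map_neg, neg_eq_zero, map_mul] at key
    rcases mul_eq_zero.mp key with hc | hc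
    · exact absurd hc hπg
    · exact hc
end

section
/- Let k be a field and let R be a k-algebra realized by the retracts {S_ℓ : ℓ ∈ Λ}. A k-linear map δ: R → R is a differential operator of order at most i on R (i.e. δ ∈ D^i(R,R)) if and only if the following two conditions hold: (1) δ_ℓ := π_ℓ∘δ∘ι_ℓ ∈ D^i(S_ℓ,S_ℓ) for every ℓ ∈ Λ; and (2) for every ℓ ∈ Λ and f ∈ R with π_ℓ(f) = 0, one has π_ℓ(δ(f)) = 0. -/
section Aux

variable {k R Λ : Type*} [Field k] [CommRing R] [Algebra k R]
    [Fintype Λ] [Nonempty Λ] {S : Λ → Type*}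
    [∀ ℓ, CommRing (S ℓ)] [∀ ℓ, IsDomain (S ℓ)] [∀ ℓ, Algebra k (S ℓ)]
    (h : RealizedByRetracts k R Λ S)

lemma RBR.pi_iota (ℓ : Λ) (s : S ℓ) : h.π ℓ (h.ι ℓ s) = s :=
  AlgHom.congr_fun (h.retract ℓ) s

lemma RBR.forward2 : ∀ (i : ℕ) (δ : R →ₗ[k] R), IsDiffOpOfOrder k R i δ →
    ∀ (ℓ : Λ) (f : R), h.π ℓ f = 0 → h.π ℓ (δ f) = 0
  | 0, δ, hδ, ℓ, f, hf => by
      have h1 : δ f = f * δ 1 := by simpa using hδ f 1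
      rw [h1, map_mul, hf, zero_mul]
  | i + 1, δ, hδ, ℓ, f, hf => by
      obtain ⟨g, hg0, hg⟩ := h.irredundant ℓ
      have hgf : g * f = 0 := h.kerInf _ (fun j => by
        by_cases hj : j = ℓ
        · subst hj; rw [map_mul, hf, mul_zero]
        · rw [map_mul, hg j hj, zero_mul])
      have hπg : h.π ℓ g ≠ 0 := fun hc => hg0 (h.kerInf g (fun j => by
        by_cases hj : j = ℓ
        · subst hj; exact hc
        · exact hg j hj))
      have hcomm := RBR.forward2 i _ (hδ g) ℓ f hf
      simp only [LinearMap.sub_apply, LinearMap.comp_apply, LinearMap.mulLeft_apply] at hcomm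
      rw [hgf, map_zero, zero_sub, map_neg, neg_eq_zero, map_mul] at hcomm
      exact (mul_eq_zero.mp hcomm).resolve_left hπg

lemma RBR.forward1 : ∀ (i : ℕ) (δ : R →ₗ[k] R), IsDiffOpOfOrder k R i δ → ∀ ℓ : Λ,
    IsDiffOpOfOrder k (S ℓ) i ((h.π ℓ).toLinearMap ∘ₗ δ ∘ₗ (h.ι ℓ).toLinearMap)
  | 0, δ, hδ, ℓ => fun s x => by
      simp only [LinearMap.comp_apply, AlgHom.toLinearMap_apply, map_mul]
      rw [hδ (h.ι ℓ s) (h.ι ℓ x), map_mul, RBR.pi_iota]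
  | i + 1, δ, hδ, ℓ => fun s => by
      have key : ((h.π ℓ).toLinearMap ∘ₗ δ ∘ₗ (h.ι ℓ).toLinearMap) ∘ₗ LinearMap.mulLeft k s
          - LinearMap.mulLeft k s ∘ₗ ((h.π ℓ).toLinearMap ∘ₗ δ ∘ₗ (h.ι ℓ).toLinearMap)
          = (h.π ℓ).toLinearMap ∘ₗ (δ ∘ₗ LinearMap.mulLeft k (h.ι ℓ s)
              - LinearMap.mulLeft k (h.ι ℓ s) ∘ₗ δ) ∘ₗ (h.ι ℓ).toLinearMap := by
        ext x
        simp only [LinearMap.coe_comp, Function.comp_apply, AlgHom.toLinearMap_apply,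
          LinearMap.sub_apply, LinearMap.mulLeft_apply, map_sub, map_mul, RBR.pi_iota]
      rw [key]
      exact RBR.forward1 i _ (hδ (h.ι ℓ s)) ℓ

lemma RBR.pi_delta (δ : R →ₗ[k] R) (ℓ : Λ)
    (h2 : ∀ f : R, h.π ℓ f = 0 → h.π ℓ (δ f) = 0) (f : R) :
    h.π ℓ (δ f) = h.π ℓ (δ (h.ι ℓ (h.π ℓ f))) := by
  have hf0 : h.π ℓ (f - h.ι ℓ (h.π ℓ f)) = 0 := by
    rw [map_sub, RBR.pi_iota, sub_self]
  have := h2 _ hf0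
  rw [map_sub, map_sub] at this
  exact sub_eq_zero.mp this

lemma RBR.backward : ∀ (i : ℕ) (δ : R →ₗ[k] R),
    (∀ ℓ : Λ, IsDiffOpOfOrder k (S ℓ) i
        ((h.π ℓ).toLinearMap ∘ₗ δ ∘ₗ (h.ι ℓ).toLinearMap)) →
    (∀ (ℓ : Λ) (f : R), h.π ℓ f = 0 → h.π ℓ (δ f) = 0) →
    IsDiffOpOfOrder k R i δ
  | 0, δ, h1, h2 => fun r x => by
      apply sub_eq_zero.mp
      apply h.kerInf
      intro ℓ
      have e1 := RBR.pi_delta h δ ℓ (h2 ℓ) (r * x)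
      have e2 := RBR.pi_delta h δ ℓ (h2 ℓ) x
      have e3 := h1 ℓ (h.π ℓ r) (h.π ℓ x)
      simp only [LinearMap.comp_apply, AlgHom.toLinearMap_apply] at e3
      rw [map_sub, e1, map_mul (h.π ℓ) r (δ x), e2, map_mul (h.π ℓ) r x, e3, sub_self]
  | i + 1, δ, h1, h2 => fun r => by
      apply RBR.backward i
      · intro ℓ
        have key : (h.π ℓ).toLinearMap ∘ₗ
            (δ ∘ₗ LinearMap.mulLeft k r - LinearMap.mulLeft k r ∘ₗ δ) ∘ₗ (h.ι ℓ).toLinearMap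
            = ((h.π ℓ).toLinearMap ∘ₗ δ ∘ₗ (h.ι ℓ).toLinearMap) ∘ₗ
                LinearMap.mulLeft k (h.π ℓ r)
              - LinearMap.mulLeft k (h.π ℓ r) ∘ₗ
                ((h.π ℓ).toLinearMap ∘ₗ δ ∘ₗ (h.ι ℓ).toLinearMap) := by
          ext s
          simp only [LinearMap.coe_comp, Function.comp_apply, AlgHom.toLinearMap_apply,
            LinearMap.sub_apply, LinearMap.mulLeft_apply, map_sub, map_mul]
          rw [RBR.pi_delta h δ ℓ (h2 ℓ) (r * h.ι ℓ s), map_mul, RBR.pi_iota, map_mul (h.ι ℓ) (h.π ℓ r) s]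
        rw [key]
        exact h1 ℓ (h.π ℓ r)
      · intro ℓ f hf
        simp only [LinearMap.sub_apply, LinearMap.comp_apply, LinearMap.mulLeft_apply,
          map_sub, map_mul]
        rw [h2 ℓ (r * f) (by rw [map_mul, hf, mul_zero]), h2 ℓ f hf, mul_zero, sub_self]

end Aux

/-- Characterization of differential operators on a `k`-algebra realized by retracts:
a `k`-linear map `δ : R → R` is a differential operator of order at most `i` iff
(1) every `δ_ℓ := π_ℓ ∘ δ ∘ ι_ℓ` is a differential operator of order at most `i` on
`S ℓ`, and (2) `π ℓ f = 0` implies `π ℓ (δ f) = 0`. -/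
theorem isDiffOp_iff_retracts {k R Λ : Type*} [Field k] [CommRing R] [Algebra k R]
    [Fintype Λ] [Nonempty Λ] (S : Λ → Type*)
    [∀ ℓ, CommRing (S ℓ)] [∀ ℓ, IsDomain (S ℓ)] [∀ ℓ, Algebra k (S ℓ)]
    (h : RealizedByRetracts k R Λ S) (i : ℕ) (δ : R →ₗ[k] R) :
    IsDiffOpOfOrder k R i δ ↔
      ((∀ ℓ : Λ, IsDiffOpOfOrder k (S ℓ) i
          ((h.π ℓ).toLinearMap ∘ₗ δ ∘ₗ (h.ι ℓ).toLinearMap))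
        ∧ (∀ (ℓ : Λ) (f : R), h.π ℓ f = 0 → h.π ℓ (δ f) = 0)) :=
  ⟨fun hδ => ⟨RBR.forward1 h i δ hδ, RBR.forward2 h i δ hδ⟩,
   fun ⟨h1, h2⟩ => RBR.backward h i δ h1 h2⟩
end

section
/- Let k be a field and let R be a k-algebra realized by the retracts {S_ℓ : ℓ ∈ Λ}. Let δ: R → R be a k-linear map satisfying: for every ℓ ∈ Λ and every g ∈ R with π_ℓ(g) = 0, one has π_ℓ(δ(g)) = 0. Then for every f ∈ R and every ℓ ∈ Λ, π_ℓ∘[δ, f]∘ι_ℓ = [δ_ℓ, π_ℓ(f)], where δ_ℓ := π_ℓ∘δ∘ι_ℓ and [φ, g] denotes φ∘(multiplication by g) − (multiplication by g)∘φ. -/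
/-- If `R` is a `k`-algebra realized by the retracts `{S ℓ}` and `δ : R → R` is a
`k`-linear map such that `π ℓ g = 0` implies `π ℓ (δ g) = 0` for all `ℓ` and `g`, then
for every `f ∈ R` and `ℓ ∈ Λ`: `π_ℓ ∘ [δ, f] ∘ ι_ℓ = [δ_ℓ, π_ℓ f]`, where
`δ_ℓ := π_ℓ ∘ δ ∘ ι_ℓ` and `[φ, g] = φ ∘ (g·) - (g·) ∘ φ`. -/
theorem retract_commutator_eq {k R Λ : Type*} [Field k] [CommRing R] [Algebra k R]
    [Fintype Λ] [Nonempty Λ] (S : Λ → Type*)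
    [∀ ℓ, CommRing (S ℓ)] [∀ ℓ, IsDomain (S ℓ)] [∀ ℓ, Algebra k (S ℓ)]
    (h : RealizedByRetracts k R Λ S) (δ : R →ₗ[k] R)
    (hker : ∀ (ℓ : Λ) (g : R), h.π ℓ g = 0 → h.π ℓ (δ g) = 0)
    (f : R) (ℓ : Λ) :
    (h.π ℓ).toLinearMap ∘ₗ
        (δ ∘ₗ LinearMap.mulLeft k f - LinearMap.mulLeft k f ∘ₗ δ) ∘ₗ
        (h.ι ℓ).toLinearMap
      = ((h.π ℓ).toLinearMap ∘ₗ δ ∘ₗ (h.ι ℓ).toLinearMap) ∘ₗ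
            LinearMap.mulLeft k (h.π ℓ f)
          - LinearMap.mulLeft k (h.π ℓ f) ∘ₗ
            ((h.π ℓ).toLinearMap ∘ₗ δ ∘ₗ (h.ι ℓ).toLinearMap) := by
  ext x
  have hretr : ∀ s : S ℓ, h.π ℓ (h.ι ℓ s) = s := fun s => by
    have := congrArg (fun g : S ℓ →ₐ[k] S ℓ => g s) (h.retract ℓ)
    simpa using this
  have key : h.π ℓ (δ (f * h.ι ℓ x)) = h.π ℓ (δ (h.ι ℓ (h.π ℓ f * x))) := by
    have hz : h.π ℓ (f * h.ι ℓ x - h.ι ℓ (h.π ℓ f * x)) = 0 := by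
      simp [hretr]
    have := hker ℓ _ hz
    rw [map_sub] at this
    rw [map_sub] at this
    exact sub_eq_zero.mp this
  simp only [LinearMap.coe_comp, Function.comp_apply, LinearMap.sub_apply,
    LinearMap.mulLeft_apply, AlgHom.toLinearMap_apply, map_sub, map_mul, hretr]
  rw [key, map_mul]
end

section
/- Let k be a field and let R be a k-algebra realized by the retracts {S_ℓ : ℓ ∈ Λ}. Then the map D(R) → ⊕_{ℓ∈Λ} D(S_ℓ) sending δ ↦ (δ_ℓ := π_ℓ∘δ∘ι_ℓ)_{ℓ∈Λ} is an injective ring homomorphism, where D(R) and each D(S_ℓ) are rings under addition and composition of operators, and the direct sum carries componentwise operations. In particular, for differential operators δ, ε ∈ D(R) and each ℓ ∈ Λ one has (δ∘ε)_ℓ = δ_ℓ∘ε_ℓ, and if δ_ℓ = 0 for all ℓ ∈ Λ then δ = 0. -/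
lemma diffOp_preserves_ker {k R Λ : Type*} [Field k] [CommRing R]
    [Algebra k R] [Fintype Λ] [Nonempty Λ] {S : Λ → Type*}
    [∀ ℓ, CommRing (S ℓ)] [∀ ℓ, IsDomain (S ℓ)] [∀ ℓ, Algebra k (S ℓ)]
    (h : RealizedByRetracts k R Λ S) :
    ∀ (i : ℕ) (δ : R →ₗ[k] R), IsDiffOpOfOrder k R i δ →
      ∀ (ℓ : Λ) (f : R), h.π ℓ f = 0 → h.π ℓ (δ f) = 0 := by
  intro i
  induction i with
  | zero =>
    intro δ hδ ℓ f hf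
    have : δ f = f * δ 1 := by simpa using hδ f 1
    rw [this, map_mul, hf, zero_mul]
  | succ i ih =>
    intro δ hδ ℓ f hf
    obtain ⟨g, hg0, hg⟩ := h.irredundant ℓ
    have hgf : g * f = 0 := by
      apply h.kerInf
      intro m
      by_cases hm : m = ℓ
      · subst hm; rw [map_mul, hf, mul_zero]
      · rw [map_mul, hg m hm, zero_mul]
    have key := ih _ (hδ g) ℓ f hf
    have hval : (δ ∘ₗ LinearMap.mulLeft k g - LinearMap.mulLeft k g ∘ₗ δ) f
        = -(g * δ f) := by
      simp [LinearMap.sub_apply, LinearMap.mulLeft_apply, hgf]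
    rw [hval, map_neg, neg_eq_zero, map_mul] at key
    have hπg : h.π ℓ g ≠ 0 := fun hz => hg0 (h.kerInf g fun m => by
      by_cases hm : m = ℓ
      · subst hm; exact hz
      · exact hg m hm)
    exact (mul_eq_zero.mp key).resolve_left hπg

/-- For `R` a `k`-algebra realized by the retracts `{S ℓ}`, the map
`δ ↦ (δ_ℓ := π_ℓ ∘ δ ∘ ι_ℓ)_ℓ` from `D(R)` to `⊕_ℓ D(S_ℓ)` is an injective ring
homomorphism:  it is additive, sends the identity operator to the identity, is
multiplicative on differential operators (`(δ∘ε)_ℓ = δ_ℓ ∘ ε_ℓ`), and a differential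
operator `δ` with `δ_ℓ = 0` for all `ℓ` is zero. -/
theorem retract_map_ring_hom_injective {k R Λ : Type*} [Field k] [CommRing R]
    [Algebra k R] [Fintype Λ] [Nonempty Λ] (S : Λ → Type*)
    [∀ ℓ, CommRing (S ℓ)] [∀ ℓ, IsDomain (S ℓ)] [∀ ℓ, Algebra k (S ℓ)]
    (h : RealizedByRetracts k R Λ S) :
    -- additivity
    (∀ (δ ε : R →ₗ[k] R) (ℓ : Λ),
        (h.π ℓ).toLinearMap ∘ₗ (δ + ε) ∘ₗ (h.ι ℓ).toLinearMap
          = (h.π ℓ).toLinearMap ∘ₗ δ ∘ₗ (h.ι ℓ).toLinearMap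
            + (h.π ℓ).toLinearMap ∘ₗ ε ∘ₗ (h.ι ℓ).toLinearMap)
    ∧ -- sends the identity to the identity
    (∀ ℓ : Λ,
        (h.π ℓ).toLinearMap ∘ₗ (LinearMap.id : R →ₗ[k] R) ∘ₗ (h.ι ℓ).toLinearMap
          = LinearMap.id)
    ∧ -- multiplicativity on differential operators
    (∀ δ ε : R →ₗ[k] R, (∃ i, IsDiffOpOfOrder k R i δ) → (∃ i, IsDiffOpOfOrder k R i ε) →
        ∀ ℓ : Λ,
          (h.π ℓ).toLinearMap ∘ₗ (δ ∘ₗ ε) ∘ₗ (h.ι ℓ).toLinearMap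
            = ((h.π ℓ).toLinearMap ∘ₗ δ ∘ₗ (h.ι ℓ).toLinearMap) ∘ₗ
                ((h.π ℓ).toLinearMap ∘ₗ ε ∘ₗ (h.ι ℓ).toLinearMap))
    ∧ -- injectivity on differential operators
    (∀ δ : R →ₗ[k] R, (∃ i, IsDiffOpOfOrder k R i δ) →
        (∀ ℓ : Λ, (h.π ℓ).toLinearMap ∘ₗ δ ∘ₗ (h.ι ℓ).toLinearMap = 0) → δ = 0) := by
  have retr : ∀ (ℓ : Λ) (s : S ℓ), h.π ℓ (h.ι ℓ s) = s := fun ℓ s =>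
    DFunLike.congr_fun (h.retract ℓ) s
  refine ⟨fun δ ε ℓ => by ext s; simp, fun ℓ => by ext s; simp [retr ℓ s], ?_, ?_⟩
  · rintro δ ε ⟨i, hδ⟩ ⟨j, hε⟩ ℓ
    ext s
    simp only [LinearMap.coe_comp, Function.comp_apply, AlgHom.toLinearMap_apply]
    have hker : h.π ℓ (ε (h.ι ℓ s) - h.ι ℓ (h.π ℓ (ε (h.ι ℓ s)))) = 0 := by
      rw [map_sub, retr, sub_self]
    have := diffOp_preserves_ker h i δ hδ ℓ _ hker
    rw [map_sub] at this
    rw [map_sub] at this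
    exact sub_eq_zero.mp this
  · rintro δ ⟨i, hδ⟩ hz
    ext f
    simp only [LinearMap.zero_apply]
    apply h.kerInf
    intro ℓ
    have hker : h.π ℓ (f - h.ι ℓ (h.π ℓ f)) = 0 := by rw [map_sub, retr, sub_self]
    have h1 := diffOp_preserves_ker h i δ hδ ℓ _ hker
    rw [map_sub, map_sub] at h1
    have h2 : h.π ℓ (δ (h.ι ℓ (h.π ℓ f))) = 0 :=
      congrArg (fun φ => φ (h.π ℓ f)) (hz ℓ)
    rw [h2, sub_zero] at h1
    exact h1
end

section
/- Let k be an algebraically closed field of characteristic zero, R = k[ℕA] a normal affine semigroup ring, and c ∈ ℕA. Let J = ⟨t^c⟩ be the principal monomial ideal generated by t^c. Then J·D(R) = D(R,J), where J·D(R) denotes the set of all finite sums ∑_i f_i∘δ_i with f_i ∈ J (acting on R by multiplication) and δ_i ∈ D(R), and D(R,J) := {δ ∈ D(R) : δ(R) ⊆ J}. -/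
open scoped BigOperators Classical

/-- The affine semigroup `ℕA ⊆ ℤ^d` generated by the columns of the integer matrix `A`. -/
def semigroupNA {d n : ℕ} (A : Matrix (Fin d) (Fin n) ℤ) : AddSubmonoid (Fin d → ℤ) :=
  AddSubmonoid.closure (Set.range fun j i => A i j)

/-- The columns of `A` generate `ℤ^d` as a group (`ℤA = ℤ^d`). -/
def FullLattice {d n : ℕ} (A : Matrix (Fin d) (Fin n) ℤ) : Prop :=
  AddSubgroup.closure (Set.range fun j i => A i j) = (⊤ : AddSubgroup (Fin d → ℤ))

/-- The cone over `A` is pointed: the semigroup `ℕA` has no nonzero invertible elements. -/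
def PointedNA {d n : ℕ} (A : Matrix (Fin d) (Fin n) ℤ) : Prop :=
  ∀ a ∈ semigroupNA A, -a ∈ semigroupNA A → a = 0

/-- Normality of `ℕA` (`ℕA = ℝ_{≥0}A ∩ ℤ^d`), expressed as saturation of `ℕA` in `ℤ^d`. -/
def NormalNA {d n : ℕ} (A : Matrix (Fin d) (Fin n) ℤ) : Prop :=
  ∀ (a : Fin d → ℤ) (m : ℕ), 0 < m → (m : ℤ) • a ∈ semigroupNA A → a ∈ semigroupNA A

/-- `F` is the primitive integral support function of a facet of `ℕA`: `F ≥ 0` on `ℕA`,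
`F(ℤ^d) = ℤ` (primitivity), and the face `{a ∈ ℕA : F a = 0}` spans a subspace of
dimension `d - 1`. -/
def IsSupportFunction {d n : ℕ} (A : Matrix (Fin d) (Fin n) ℤ)
    (F : (Fin d → ℤ) →ₗ[ℤ] ℤ) : Prop :=
  (∀ a ∈ semigroupNA A, 0 ≤ F a) ∧ (∃ x : Fin d → ℤ, F x = 1) ∧
    Module.finrank ℚ (Submodule.span ℚ
      ((fun a : Fin d → ℤ => (fun i => (a i : ℚ))) ''
        {a | a ∈ semigroupNA A ∧ F a = 0})) = d - 1

/-- The linear polynomial `F(x₁,…,x_d)` in `k[x₁,…,x_d]` attached to the integral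
linear form `F`. -/
noncomputable def linPoly (k : Type*) [CommRing k] {d : ℕ}
    (F : (Fin d → ℤ) →ₗ[ℤ] ℤ) : MvPolynomial (Fin d) k :=
  ∑ i : Fin d, MvPolynomial.C ((F (Pi.single i 1) : ℤ) : k) * MvPolynomial.X i

/-- `G_m = ∏_{F ∈ Fac, F(m) < 0} ∏_{i=0}^{-F(m)-1} (F(x) - i)`, the product over the
support functions of all facets. -/
noncomputable def Gpoly (k : Type*) [CommRing k] {d : ℕ}
    (Fac : Finset ((Fin d → ℤ) →ₗ[ℤ] ℤ)) (m : Fin d → ℤ) : MvPolynomial (Fin d) k :=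
  ∏ F ∈ Fac.filter (fun F => F m < 0),
    ∏ i ∈ Finset.range (-(F m)).toNat, (linPoly k F - MvPolynomial.C (i : k))

/-- `H_{σ,m} = F_σ(x) + F_σ(m)`. -/
noncomputable def Hpoly (k : Type*) [CommRing k] {d : ℕ}
    (F : (Fin d → ℤ) →ₗ[ℤ] ℤ) (m : Fin d → ℤ) : MvPolynomial (Fin d) k :=
  linPoly k F + MvPolynomial.C ((F m : ℤ) : k)

/-- Membership of the monomial `t^b` in the radical monomial ideal
`J = ⋂_{i=1}^r P_{τ_i}`, where `τ_i = ⋂_{j} σ_{i,j}`: this holds iff `b ∈ ℕA` and, for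
each `i`, `b ∉ τ_i`, i.e. `F_{i,j}(b) ≠ 0` for some `j`. -/
def memJ {d n r : ℕ} (A : Matrix (Fin d) (Fin n) ℤ) (κ : Fin r → ℕ)
    (Fσ : ∀ i : Fin r, Fin (κ i) → ((Fin d → ℤ) →ₗ[ℤ] ℤ)) (b : Fin d → ℤ) : Prop :=
  b ∈ semigroupNA A ∧ ∀ i : Fin r, ∃ j : Fin (κ i), Fσ i j b ≠ 0

/-- Evaluation of `q ∈ k[x₁,…,x_d]` at a lattice point `a ∈ ℤ^d`. -/
noncomputable def evalAt (k : Type*) [CommRing k] {d : ℕ} (a : Fin d → ℤ)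
    (q : MvPolynomial (Fin d) k) : k :=
  MvPolynomial.eval (fun i => ((a i : ℤ) : k)) q

/-- `D(R)`: the set of all `k`-linear differential operators on `R`, inside the
endomorphism ring `Module.End k R` (whose multiplication is composition). -/
def diffOps (k R : Type*) [CommSemiring k] [CommRing R] [Algebra k R] :
    Set (Module.End k R) :=
  {δ | ∃ i : ℕ, IsDiffOpOfOrder k R i δ}

section Aux

variable {k R : Type*} [CommSemiring k] [CommRing R] [Algebra k R]

theorem isDiffOp_zero : ∀ i : ℕ, IsDiffOpOfOrder k R i 0 := by
  intro i
  induction i with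
  | zero => intro r x; simp
  | succ i ih =>
      intro r
      have : ((0 : R →ₗ[k] R) ∘ₗ LinearMap.mulLeft k r
          - LinearMap.mulLeft k r ∘ₗ (0 : R →ₗ[k] R)) = 0 := by
        ext x; simp
      rw [this]; exact ih

theorem isDiffOp_succ {i : ℕ} {δ : R →ₗ[k] R}
    (h : IsDiffOpOfOrder k R i δ) : IsDiffOpOfOrder k R (i + 1) δ := by
  induction i generalizing δ with
  | zero =>
      intro r
      have : (δ ∘ₗ LinearMap.mulLeft k r - LinearMap.mulLeft k r ∘ₗ δ) = 0 := by
        ext x; simp [h r x]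
      rw [this]; exact isDiffOp_zero 0
  | succ i ih =>
      intro r
      exact ih (h r)

theorem isDiffOp_mono {i j : ℕ} (hij : i ≤ j) {δ : R →ₗ[k] R}
    (h : IsDiffOpOfOrder k R i δ) : IsDiffOpOfOrder k R j δ := by
  induction j with
  | zero => simpa [Nat.le_zero.mp hij] using h
  | succ j ihj =>
      rcases Nat.lt_or_ge i (j + 1) with hlt | hge
      · exact isDiffOp_succ (ihj (Nat.lt_succ_iff.mp hlt))
      · have : i = j + 1 := le_antisymm hij hge
        subst this; exact h

theorem isDiffOp_add {i : ℕ} {δ ε : R →ₗ[k] R}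
    (hδ : IsDiffOpOfOrder k R i δ) (hε : IsDiffOpOfOrder k R i ε) :
    IsDiffOpOfOrder k R i (δ + ε) := by
  induction i generalizing δ ε with
  | zero => intro r x; simp [LinearMap.add_apply, hδ r x, hε r x, mul_add]
  | succ i ih =>
      intro r
      have : ((δ + ε) ∘ₗ LinearMap.mulLeft k r - LinearMap.mulLeft k r ∘ₗ (δ + ε))
          = (δ ∘ₗ LinearMap.mulLeft k r - LinearMap.mulLeft k r ∘ₗ δ)
            + (ε ∘ₗ LinearMap.mulLeft k r - LinearMap.mulLeft k r ∘ₗ ε) := by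
        ext x; simp; ring
      rw [this]
      exact ih (hδ r) (hε r)

theorem isDiffOp_mulLeft_comp {i : ℕ} (f : R) {δ : R →ₗ[k] R}
    (h : IsDiffOpOfOrder k R i δ) :
    IsDiffOpOfOrder k R i (LinearMap.mulLeft k f ∘ₗ δ) := by
  induction i generalizing δ with
  | zero =>
      intro r x
      simp only [LinearMap.comp_apply, LinearMap.mulLeft_apply, h r x]
      ring
  | succ i ih =>
      intro r
      have : ((LinearMap.mulLeft k f ∘ₗ δ) ∘ₗ LinearMap.mulLeft k r
            - LinearMap.mulLeft k r ∘ₗ (LinearMap.mulLeft k f ∘ₗ δ))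
          = LinearMap.mulLeft k f ∘ₗ
            (δ ∘ₗ LinearMap.mulLeft k r - LinearMap.mulLeft k r ∘ₗ δ) := by
        ext x; simp; ring
      rw [this]
      exact ih (h r)

/-- If `g·ε = δ` pointwise and multiplication by `g` is injective, then `ε` is a
differential operator of any order that `δ` is. -/
theorem isDiffOp_of_mul_eq {g : R} (hg : Function.Injective (fun x : R => g * x)) :
    ∀ (i : ℕ) (δ ε : R →ₗ[k] R), (∀ x, g * ε x = δ x) →
      IsDiffOpOfOrder k R i δ → IsDiffOpOfOrder k R i ε := by
  intro i
  induction i with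
  | zero =>
      intro δ ε hgε hδ r x
      apply hg
      show g * ε (r * x) = g * (r * ε x)
      rw [hgε, hδ r x, mul_left_comm, hgε]
  | succ i ih =>
      intro δ ε hgε hδ r
      refine ih (δ ∘ₗ LinearMap.mulLeft k r - LinearMap.mulLeft k r ∘ₗ δ) _ ?_ (hδ r)
      intro x
      simp only [LinearMap.sub_apply, LinearMap.comp_apply, LinearMap.mulLeft_apply,
        mul_sub, hgε, mul_left_comm g r (ε x)]

end Aux

/-- For `R = k[ℕA]` a normal affine semigroup ring and `J = ⟨t^c⟩` a principal
monomial ideal, `J·D(R) = D(R,J)`:  the set of finite sums `∑ fᵢ ∘ δᵢ` with `fᵢ ∈ J`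
(acting by multiplication) and `δᵢ ∈ D(R)` equals `{δ ∈ D(R) : δ(R) ⊆ J}`. -/
theorem principal_monomial_ideal_mul_diffOps
    {k : Type*} [Field k] [IsAlgClosed k] [CharZero k]
    {d n : ℕ} (A : Matrix (Fin d) (Fin n) ℤ)
    (hfull : FullLattice A) (hpointed : PointedNA A) (hnormal : NormalNA A)
    (c : Fin d → ℤ) (hc : c ∈ semigroupNA A) :
    (AddSubmonoid.closure
        {x : Module.End k (AddMonoidAlgebra k ↥(semigroupNA A)) |
          ∃ f ∈ Ideal.span
              {AddMonoidAlgebra.single (⟨c, hc⟩ : semigroupNA A) (1 : k)},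
            ∃ δ ∈ diffOps k (AddMonoidAlgebra k ↥(semigroupNA A)),
              x = LinearMap.mulLeft k f ∘ₗ δ}
      : Set (Module.End k (AddMonoidAlgebra k ↥(semigroupNA A))))
    = {δ : Module.End k (AddMonoidAlgebra k ↥(semigroupNA A)) |
        δ ∈ diffOps k (AddMonoidAlgebra k ↥(semigroupNA A)) ∧
        ∀ x : AddMonoidAlgebra k ↥(semigroupNA A),
          δ x ∈ Ideal.span
            {AddMonoidAlgebra.single (⟨c, hc⟩ : semigroupNA A) (1 : k)}} := by
  classical
  set R := AddMonoidAlgebra k ↥(semigroupNA A) with hR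
  set g : R := AddMonoidAlgebra.single (⟨c, hc⟩ : semigroupNA A) (1 : k) with hg
  have hgne : g ≠ 0 := fun h =>
    one_ne_zero (AddMonoidAlgebra.single_eq_zero.mp h)
  haveI : UniqueSums ↥(semigroupNA A) :=
    UniqueSums.of_injective_addHom (semigroupNA A).subtype.toAddHom Subtype.val_injective
      inferInstance
  haveI : NoZeroDivisors R := inferInstance
  have hginj : Function.Injective (fun x : R => g * x) := fun x y hxy =>
    mul_left_cancel₀ hgne hxy
  apply Set.Subset.antisymm
  · -- J·D(R) ⊆ D(R, J)
    intro x hx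
    refine AddSubmonoid.closure_induction ?_ ?_ ?_ hx
    · rintro y ⟨f, hf, δ, ⟨i, hi⟩, rfl⟩
      refine ⟨⟨i, isDiffOp_mulLeft_comp f hi⟩, fun z => ?_⟩
      simp only [LinearMap.comp_apply, LinearMap.mulLeft_apply]
      exact Ideal.mul_mem_right _ _ hf
    · exact ⟨⟨0, fun r z => by simp⟩, fun z => by
        simpa using (Ideal.span _).zero_mem⟩
    · rintro y z _ _ ⟨⟨i, hi⟩, hyJ⟩ ⟨⟨j, hj⟩, hzJ⟩
      refine ⟨⟨max i j, isDiffOp_add (isDiffOp_mono (le_max_left i j) hi)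
        (isDiffOp_mono (le_max_right i j) hj)⟩, fun w => ?_⟩
      exact (Ideal.span _).add_mem (hyJ w) (hzJ w)
  · -- D(R, J) ⊆ J·D(R)
    rintro δ ⟨⟨i, hi⟩, hJ⟩
    have hdiv : ∀ x : R, ∃ y : R, δ x = g * y := by
      intro x
      exact (Ideal.mem_span_singleton.mp (hJ x))
    let ε : R →ₗ[k] R :=
      { toFun := fun x => Classical.choose (hdiv x)
        map_add' := by
          intro x y
          apply hginj
          show g * _ = g * _
          rw [← Classical.choose_spec (hdiv (x + y)), mul_add,
            ← Classical.choose_spec (hdiv x), ← Classical.choose_spec (hdiv y),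
            map_add]
        map_smul' := by
          intro a x
          apply hginj
          show g * _ = g * _
          rw [← Classical.choose_spec (hdiv (a • x)), mul_smul_comm,
            ← Classical.choose_spec (hdiv x), map_smul, RingHom.id_apply] }
    have hgε : ∀ x, g * ε x = δ x := fun x => (Classical.choose_spec (hdiv x)).symm
    have hεdiff : IsDiffOpOfOrder k R i ε := isDiffOp_of_mul_eq hginj i δ ε hgε hi
    have hδeq : δ = LinearMap.mulLeft k g ∘ₗ ε := by
      apply LinearMap.ext; intro x
      simp only [LinearMap.comp_apply, LinearMap.mulLeft_apply]
      exact (hgε x).symm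
    exact AddSubmonoid.subset_closure
      ⟨g, Ideal.subset_span rfl, ε, ⟨i, hεdiff⟩, hδeq⟩
end
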